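/- Cassini's identity for Fibonacci hybrid quaternions: for n ≥ 1, F̂_{n+1}·F̂_{n-1} - F̂_n² = (-1)ⁿ·(α·α*·β*·α̲·β̲ - β·β*·α*·β̲·α̲)/(α - β), where α = (1+√5)/2, β = (1-√5)/2, α* = 1 + 𝐢α + εα² + 𝐡α³, β* = 1 + 𝐢β + εβ² + 𝐡β³, α̲ = 1 + iα + jα² + kα³, β̲ = 1 + iβ + jβ² + kβ³. -/

import Mathlib

/-- A hybrid number over a ring `R`: `re + imI·𝐢 + imE·ε + imH·𝐡` with
`𝐢² = -1`, `ε² = 0`, `𝐡² = 1`, `𝐢ε = 1 - 𝐡`, `ε𝐢 = 1 + 𝐡`,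
`𝐢𝐡 = ε + 𝐢`, `𝐡𝐢 = -ε - 𝐢`, `ε𝐡 = -ε`, `𝐡ε = ε`. -/
@[ext]
structure Hybrid (R : Type*) where
  re : R
  imI : R
  imE : R
  imH : R

namespace Hybrid

variable {R : Type*} [Ring R]

instance : Zero (Hybrid R) := ⟨⟨0, 0, 0, 0⟩⟩
instance : One (Hybrid R) := ⟨⟨1, 0, 0, 0⟩⟩
instance : Add (Hybrid R) :=
  ⟨fun x y => ⟨x.re + y.re, x.imI + y.imI, x.imE + y.imE, x.imH + y.imH⟩⟩
instance : Neg (Hybrid R) := ⟨fun x => ⟨-x.re, -x.imI, -x.imE, -x.imH⟩⟩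
instance : Sub (Hybrid R) :=
  ⟨fun x y => ⟨x.re - y.re, x.imI - y.imI, x.imE - y.imE, x.imH - y.imH⟩⟩

/-- Multiplication of hybrid numbers, obtained by bilinear extension of the
multiplication table of the hybrid units (units commute with coefficients). -/
instance : Mul (Hybrid R) := ⟨fun x y =>
  ⟨x.re * y.re - x.imI * y.imI + x.imI * y.imE + x.imE * y.imI + x.imH * y.imH,
   x.re * y.imI + x.imI * y.re + x.imI * y.imH - x.imH * y.imI,
   x.re * y.imE + x.imE * y.re + x.imI * y.imH - x.imH * y.imI
     + x.imH * y.imE - x.imE * y.imH,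
   x.re * y.imH + x.imH * y.re + x.imE * y.imI - x.imI * y.imE⟩⟩

instance {S : Type*} [SMul S R] : SMul S (Hybrid R) :=
  ⟨fun s x => ⟨s • x.re, s • x.imI, s • x.imE, s • x.imH⟩⟩

/-- The hybrid unit `𝐢`. -/
def iu : Hybrid R := ⟨0, 1, 0, 0⟩
/-- The hybrid unit `ε`. -/
def eu : Hybrid R := ⟨0, 0, 1, 0⟩
/-- The hybrid unit `𝐡`. -/
def hu : Hybrid R := ⟨0, 0, 0, 1⟩

end Hybrid

noncomputable section

open Quaternion

/-- Hybrid quaternions: hybrid numbers with quaternion coefficients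
(the quaternion units commute with the hybrid units). -/
abbrev HQ := Hybrid (ℍ[ℝ])

/-- The quaternion unit `i` in the hybrid quaternion algebra. -/
def qi : HQ := ⟨⟨0, 1, 0, 0⟩, 0, 0, 0⟩
/-- The quaternion unit `j` in the hybrid quaternion algebra. -/
def qj : HQ := ⟨⟨0, 0, 1, 0⟩, 0, 0, 0⟩
/-- The quaternion unit `k` in the hybrid quaternion algebra. -/
def qk : HQ := ⟨⟨0, 0, 0, 1⟩, 0, 0, 0⟩

/-- Embedding of the real quaternions into the hybrid quaternions. -/
def eQ (q : ℍ[ℝ]) : HQ := ⟨q, 0, 0, 0⟩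
/-- Embedding of the hybrid numbers into the hybrid quaternions. -/
def eH (z : Hybrid ℝ) : HQ :=
  ⟨⟨z.re, 0, 0, 0⟩, ⟨z.imI, 0, 0, 0⟩, ⟨z.imE, 0, 0, 0⟩, ⟨z.imH, 0, 0, 0⟩⟩

/-- Fibonacci numbers, as real numbers. -/
def F (n : ℕ) : ℝ := Nat.fib n

/-- Lucas numbers, as real numbers. -/
def lucas : ℕ → ℝ
  | 0 => 2
  | 1 => 1
  | n + 2 => lucas (n + 1) + lucas n

/-- The Fibonacci quaternion `F̃ₘ = Fₘ + i F_{m+1} + j F_{m+2} + k F_{m+3}`. -/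
def fq (m : ℕ) : ℍ[ℝ] := ⟨F m, F (m + 1), F (m + 2), F (m + 3)⟩
/-- The Lucas quaternion `L̃ₘ`. -/
def lq (m : ℕ) : ℍ[ℝ] := ⟨lucas m, lucas (m + 1), lucas (m + 2), lucas (m + 3)⟩
/-- The Fibonacci hybrid number `F̆ₘ = Fₘ + 𝐢 F_{m+1} + ε F_{m+2} + 𝐡 F_{m+3}`. -/
def fh (m : ℕ) : Hybrid ℝ := ⟨F m, F (m + 1), F (m + 2), F (m + 3)⟩
/-- The Lucas hybrid number `L̆ₘ`. -/
def lh (m : ℕ) : Hybrid ℝ := ⟨lucas m, lucas (m + 1), lucas (m + 2), lucas (m + 3)⟩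
/-- The Fibonacci hybrid quaternion
`F̂ₙ = F̃ₙ + 𝐢 F̃_{n+1} + ε F̃_{n+2} + 𝐡 F̃_{n+3}
    = F̆ₙ + i F̆_{n+1} + j F̆_{n+2} + k F̆_{n+3}`. -/
def Fhat (n : ℕ) : HQ := ⟨fq n, fq (n + 1), fq (n + 2), fq (n + 3)⟩
/-- The Lucas hybrid quaternion `L̂ₙ`. -/
def Lhat (n : ℕ) : HQ := ⟨lq n, lq (n + 1), lq (n + 2), lq (n + 3)⟩

/-- `α = (1 + √5)/2`. -/
def ga : ℝ := (1 + Real.sqrt 5) / 2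
/-- `β = (1 - √5)/2`. -/
def gb : ℝ := (1 - Real.sqrt 5) / 2

/-- `x* = 1 + 𝐢 x + ε x² + 𝐡 x³` (a hybrid number with real coefficients). -/
def hstar (x : ℝ) : HQ :=
  ⟨1, ⟨x, 0, 0, 0⟩, ⟨x ^ 2, 0, 0, 0⟩, ⟨x ^ 3, 0, 0, 0⟩⟩
/-- `x̲ = 1 + i x + j x² + k x³` (a quaternion with real coefficients). -/
def qund (x : ℝ) : HQ := eQ ⟨1, x, x ^ 2, x ^ 3⟩

/-! Binet's formula lifts to the hybrid quaternions: `F̂ₘ = c (αᵐ A - βᵐ B)` with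
`c = (α - β)⁻¹`, `A = α* α̲`, `B = β* β̲`. Expanding `F̂_{m+2} F̂ₘ - F̂_{m+1}²` uses only
bilinearity of the product, so in any algebra, commutative or not, it equals
`c² (β - α) (αβ)ᵐ (α AB - β BA)`; here `c² (β - α) = -c` and `αβ = -1`. Finally
`AB = α* β* α̲ β̲` and `BA = β* α* β̲ α̲` because quaternion units commute with hybrid units. -/

namespace Hybrid

variable {R : Type*}

section
variable {S : Type*} [SMul S R] (s : S) (x : Hybrid R)
@[simp] lemma smul_re : (s • x).re = s • x.re := rfl
@[simp] lemma smul_imI : (s • x).imI = s • x.imI := rfl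
@[simp] lemma smul_imE : (s • x).imE = s • x.imE := rfl
@[simp] lemma smul_imH : (s • x).imH = s • x.imH := rfl
end

variable [Ring R]

@[simp] lemma zero_re : (0 : Hybrid R).re = 0 := rfl
@[simp] lemma zero_imI : (0 : Hybrid R).imI = 0 := rfl
@[simp] lemma zero_imE : (0 : Hybrid R).imE = 0 := rfl
@[simp] lemma zero_imH : (0 : Hybrid R).imH = 0 := rfl

section
variable (x y : Hybrid R)
@[simp] lemma add_re : (x + y).re = x.re + y.re := rfl
@[simp] lemma add_imI : (x + y).imI = x.imI + y.imI := rfl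
@[simp] lemma add_imE : (x + y).imE = x.imE + y.imE := rfl
@[simp] lemma add_imH : (x + y).imH = x.imH + y.imH := rfl
@[simp] lemma neg_re : (-x).re = -x.re := rfl
@[simp] lemma neg_imI : (-x).imI = -x.imI := rfl
@[simp] lemma neg_imE : (-x).imE = -x.imE := rfl
@[simp] lemma neg_imH : (-x).imH = -x.imH := rfl
@[simp] lemma sub_re : (x - y).re = x.re - y.re := rfl
@[simp] lemma sub_imI : (x - y).imI = x.imI - y.imI := rfl
@[simp] lemma sub_imE : (x - y).imE = x.imE - y.imE := rfl
@[simp] lemma sub_imH : (x - y).imH = x.imH - y.imH := rfl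
@[simp] lemma mul_re :
    (x * y).re = x.re * y.re - x.imI * y.imI + x.imI * y.imE + x.imE * y.imI
      + x.imH * y.imH := rfl
@[simp] lemma mul_imI :
    (x * y).imI = x.re * y.imI + x.imI * y.re + x.imI * y.imH - x.imH * y.imI := rfl
@[simp] lemma mul_imE :
    (x * y).imE = x.re * y.imE + x.imE * y.re + x.imI * y.imH - x.imH * y.imI
      + x.imH * y.imE - x.imE * y.imH := rfl
@[simp] lemma mul_imH :
    (x * y).imH = x.re * y.imH + x.imH * y.re + x.imE * y.imI - x.imI * y.imE := rfl
end

-- `nsmul` and `zsmul` are the componentwise actions already in scope, so no diamond arises.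
instance : AddCommGroup (Hybrid R) where
  add_assoc a b c := by ext <;> simp [add_assoc]
  zero_add a := by ext <;> simp
  add_zero a := by ext <;> simp
  add_comm a b := by ext <;> simp [add_comm]
  neg_add_cancel a := by ext <;> simp
  sub_eq_add_neg a b := by ext <;> simp [sub_eq_add_neg]
  nsmul n x := n • x
  nsmul_zero x := by ext <;> simp
  nsmul_succ n x := by ext <;> simp [add_mul]
  zsmul n x := n • x
  zsmul_zero' x := by ext <;> simp
  zsmul_succ' n x := by ext <;> simp [add_mul]
  zsmul_neg' n x := by ext <;> simp [add_mul, add_comm]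

instance : NonUnitalNonAssocRing (Hybrid R) where
  left_distrib x y z := by ext <;> simp [mul_add] <;> abel
  right_distrib x y z := by ext <;> simp [add_mul] <;> abel
  zero_mul x := by ext <;> simp
  mul_zero x := by ext <;> simp

variable {S : Type*} [Semiring S] [Module S R]

instance : Module S (Hybrid R) where
  one_smul x := by ext <;> simp
  mul_smul a b x := by ext <;> simp [mul_smul]
  smul_zero a := by ext <;> simp
  smul_add a x y := by ext <;> simp
  add_smul a b x := by ext <;> simp [add_smul]
  zero_smul x := by ext <;> simp

instance [IsScalarTower S R R] : IsScalarTower S (Hybrid R) (Hybrid R) where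
  smul_assoc a x y := by ext <;> simp [smul_sub, smul_add, smul_mul_assoc]

instance [SMulCommClass S R R] : SMulCommClass S (Hybrid R) (Hybrid R) where
  smul_comm a x y := by ext <;> simp [smul_sub, smul_add, mul_smul_comm]

end Hybrid

theorem cassini_of_binet {K A : Type*} [CommRing K] [NonUnitalNonAssocRing A] [Module K A]
    [IsScalarTower K A A] [SMulCommClass K A A] {α β c : K} {a b : A} {x : ℕ → A}
    (hx : ∀ m, x m = c • (α ^ m • a - β ^ m • b)) (m : ℕ) :
    x (m + 2) * x m - x (m + 1) * x (m + 1) =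
      (c ^ 2 * (β - α) * (α * β) ^ m) • (α • (a * b) - β • (b * a)) := by
  simp only [hx, mul_sub, sub_mul, smul_mul_assoc, mul_smul_comm, smul_smul]
  module

section
variable (x : ℝ)
@[simp] lemma hstar_re : (hstar x).re = 1 := rfl
@[simp] lemma hstar_imI : (hstar x).imI = (x : ℍ[ℝ]) := rfl
@[simp] lemma hstar_imE : (hstar x).imE = ((x ^ 2 : ℝ) : ℍ[ℝ]) := rfl
@[simp] lemma hstar_imH : (hstar x).imH = ((x ^ 3 : ℝ) : ℍ[ℝ]) := rfl
@[simp] lemma qund_re_re : (qund x).re.re = 1 := rfl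
@[simp] lemma qund_re_imI : (qund x).re.imI = x := rfl
@[simp] lemma qund_re_imJ : (qund x).re.imJ = x ^ 2 := rfl
@[simp] lemma qund_re_imK : (qund x).re.imK = x ^ 3 := rfl
@[simp] lemma qund_imI : (qund x).imI = 0 := rfl
@[simp] lemma qund_imE : (qund x).imE = 0 := rfl
@[simp] lemma qund_imH : (qund x).imH = 0 := rfl
end

open Real in
lemma F_eq_binet (m : ℕ) : F m = (ga - gb)⁻¹ * (ga ^ m - gb ^ m) := by
  rw [F, coe_fib_eq, div_eq_inv_mul, ← goldenRatio_sub_goldenConj]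
  rfl

-- With `Quaternion.coe_pow`, `simp` would turn `↑(x ^ 2)` into `↑x ^ 2`, whose components it cannot compute.
lemma Fhat_eq_binet (m : ℕ) :
    Fhat m = (ga - gb)⁻¹ • (ga ^ m • (hstar ga * qund ga) - gb ^ m • (hstar gb * qund gb)) := by
  ext <;> simp [Fhat, fq, F_eq_binet, -Quaternion.coe_pow, -mul_eq_mul_left_iff] <;> ring

lemma hstar_mul_qund_mul_hstar_mul_qund (x y : ℝ) :
    hstar x * qund x * (hstar y * qund y) = hstar x * hstar y * qund x * qund y := by
  ext <;> simp [-Quaternion.coe_pow] <;> ring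

/-- Cassini identity for Fibonacci hybrid quaternions,
`F̂_{n+1} F̂_{n-1} - F̂ₙ² = (-1)ⁿ (α α* β* α̲ β̲ - β β* α* β̲ α̲)/(α - β)`. -/
theorem fib_hybrid_quaternion_cassini (n : ℕ) (hn : 1 ≤ n) :
    Fhat (n + 1) * Fhat (n - 1) - Fhat n * Fhat n =
      ((-1 : ℝ) ^ n * (ga - gb)⁻¹) •
        (ga • (hstar ga * hstar gb * qund ga * qund gb) -
          gb • (hstar gb * hstar ga * qund gb * qund ga)) := by
  obtain ⟨m, rfl⟩ := Nat.exists_eq_add_of_le' hn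
  rw [Nat.add_sub_cancel, cassini_of_binet Fhat_eq_binet, hstar_mul_qund_mul_hstar_mul_qund,
    hstar_mul_qund_mul_hstar_mul_qund]
  congr 1
  have hsub : ga - gb = √5 := Real.goldenRatio_sub_goldenConj
  have hne : ga - gb ≠ 0 := by rw [hsub]; positivity
  rw [show ga * gb = -1 from Real.goldenRatio_mul_goldenConj]
  field_simp
  ring
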